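/- arXiv:2602.03837 — 2 statements merged into one kernel-verified Lean document; each statement's English description precedes it below -/
import Mathlib

section
/- Define the threshold function $t_{k,h} = \frac{k}{\sqrt{k^2+h^2}}$ for integers $k \geq 1$, $0 \leq h \leq k$. Define the recurrence $R(k,0) = 0$ and for $h \geq 1$, $R(k,h) = \min\{A_{k,h}, B_{k,h}, C_{k,h}\}$ where $A_{k,h} = \frac{t_{k,h}}{k} + (1 - \frac{t_{k,h}}{k}) R(k,h-1)$, $B_{k,h} = \frac{1}{k} + (1 - \frac{1+t_{k,h}}{k}) R(k-1,h-1)$, and $C_{k,h} = \frac{1}{1+t_{k,h}}$. Then $R(k,k) = 2 - \sqrt{2}$ for every integer $k \geq 1$. -/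
set_option maxHeartbeats 1000000

/-- The threshold function `t_{k,h} = k / √(k² + h²)`. -/
noncomputable def tthr (k h : ℕ) : ℝ := (k : ℝ) / Real.sqrt ((k : ℝ) ^ 2 + (h : ℝ) ^ 2)

/-- The recurrence `R(k, h)`. -/
noncomputable def R : ℕ → ℕ → ℝ
  | _, 0 => 0
  | k, h + 1 =>
    min (min (tthr k (h + 1) / k + (1 - tthr k (h + 1) / k) * R k h)
             (1 / k + (1 - (1 + tthr k (h + 1)) / k) * R (k - 1) h))
        (1 / (1 + tthr k (h + 1)))

lemma star (a b S T : ℝ) (hb : 2 ≤ b) (ha : 0 ≤ a) (hab : a + 1 ≤ b)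
    (hS2 : S^2 = b^2 + (a+1)^2) (hS : 0 ≤ S) (hT2 : T^2 = (b-1)^2 + a^2) (hT : 0 ≤ T) :
    (b-1)*(a+1) + a*b + ((b-1)*a-1)*T ≤ (b-1)*(a+1)*S := by
  have hbS : b ≤ S := by nlinarith [sq_nonneg (S - b)]
  have hP : 0 ≤ (b-1)*(a+1) := by nlinarith
  rcases le_or_gt ((b-1)*a) 1 with hQ | hQ
  · have h1 : ((b-1)*a-1)*T ≤ 0 := mul_nonpos_of_nonpos_of_nonneg (by linarith) hT
    nlinarith [mul_le_mul_of_nonneg_left hbS hP]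
  · have hQ' : 0 ≤ (b-1)*a - 1 := by linarith
    have hT' : T ≤ b - 1 + a := by nlinarith [sq_nonneg (T - (b-1+a))]
    have hc : 0 ≤ b - 1 - a := by linarith
    have hM : 0 ≤ (b-1)*(a+1) + a*b := by nlinarith
    have key : ((b-1)*(a+1) + a*b + ((b-1)*a-1)*T)^2 ≤ ((b-1)*(a+1)*S)^2 := by
      calc ((b-1)*(a+1) + a*b + ((b-1)*a-1)*T)^2
          ≤ ((b-1)*(a+1)+a*b)^2 + 2*((b-1)*(a+1)+a*b)*((b-1)*a-1)*(b-1+a)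
            + ((b-1)*a-1)^2*T^2 := by
            nlinarith [mul_nonneg hM hQ', mul_le_mul_of_nonneg_left hT' (mul_nonneg hM hQ')]
        _ = ((b-1)*(a+1)+a*b)^2 + 2*((b-1)*(a+1)+a*b)*((b-1)*a-1)*(b-1+a)
            + ((b-1)*a-1)^2*((b-1)^2+a^2) := by rw [hT2]
        _ ≤ ((b-1)*(a+1))^2 * (b^2+(a+1)^2) := by
            have hc : (0:ℝ) ≤ b - 1 - a := by linarith
            linarith [mul_nonneg (pow_nonneg ha 0) (pow_nonneg hc 2), mul_nonneg (pow_nonneg ha 0) (pow_nonneg hc 3), mul_nonneg (pow_nonneg ha 0) (pow_nonneg hc 4), mul_nonneg (pow_nonneg ha 1) (pow_nonneg hc 1), mul_nonneg (pow_nonneg ha 1) (pow_nonneg hc 2), mul_nonneg (pow_nonneg ha 1) (pow_nonneg hc 3), mul_nonneg (pow_nonneg ha 1) (pow_nonneg hc 4), mul_nonneg (pow_nonneg ha 2) (pow_nonneg hc 0), mul_nonneg (pow_nonneg ha 2) (pow_nonneg hc 1), mul_nonneg (pow_nonneg ha 2) (pow_nonneg hc 2), mul_nonneg (pow_nonneg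 ha 2) (pow_nonneg hc 3), mul_nonneg (pow_nonneg ha 3) (pow_nonneg hc 0), mul_nonneg (pow_nonneg ha 3) (pow_nonneg hc 1), mul_nonneg (pow_nonneg ha 3) (pow_nonneg hc 2), mul_nonneg (pow_nonneg ha 4) (pow_nonneg hc 0), mul_nonneg (pow_nonneg ha 4) (pow_nonneg hc 1)]
        _ = ((b-1)*(a+1)*S)^2 := by linear_combination (-(((b-1)*(a+1))^2)) * hS2
    nlinarith [key, mul_nonneg hP hS, hM, mul_nonneg hQ' hT]

lemma Bbranch (a b S T r : ℝ) (hb : 2 ≤ b) (ha : 0 ≤ a) (hab : a + 1 ≤ b)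
    (hS2 : S^2 = b^2 + (a+1)^2) (hS : 0 ≤ S) (hT2 : T^2 = (b-1)^2 + a^2) (hT : 0 ≤ T)
    (hr : (b-1+a-T)/(b-1) ≤ r) :
    (b+a+1-S)/b ≤ 1/b + (1-(1+b/S)/b)*r := by
  have hb0 : (0:ℝ) < b := by linarith
  have hbS : b ≤ S := by nlinarith [sq_nonneg (S - b)]
  have hS0 : (0:ℝ) < S := by linarith
  have hcoef : 0 ≤ 1-(1+b/S)/b := by
    have h1 : b/S ≤ 1 := (div_le_one hS0).2 hbS
    rw [sub_nonneg, div_le_one hb0]; linarith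
  have hchain : 1/b + (1-(1+b/S)/b)*((b-1+a-T)/(b-1)) ≤ 1/b + (1-(1+b/S)/b)*r := by
    have := mul_le_mul_of_nonneg_left hr hcoef; linarith
  refine le_trans ?_ hchain
  -- clear denominators
  have hb1 : (0:ℝ) < b - 1 := by linarith
  have hE : 0 ≤ (b-1)*S - b := by nlinarith
  have hW : (0:ℝ) < (b-1)*S + b*T := by nlinarith [mul_nonneg hb0.le hT]
  have hDW : ((b-1)*S - b*T)*((b-1)*S + b*T) = (b-1-a)*((b-1)*(a+1)+a*b) := by
    linear_combination (b-1)^2*hS2 - b^2*hT2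
  have hstar := star a b S T hb ha hab hS2 hS hT2 hT
  have hMEQW : ((b-1)*a-1)*((b-1)*S + b*T) ≤ ((b-1)*(a+1)+a*b)*((b-1)*S - b) := by
    nlinarith [mul_le_mul_of_nonneg_left hstar hb0.le]
  have hc : 0 ≤ b - 1 - a := by linarith
  have hDE : (b-1-a)*((b-1)*a-1) ≤ ((b-1)*S - b*T)*((b-1)*S - b) := by
    have h5 : (((b-1)*S - b*T)*((b-1)*S - b))*((b-1)*S + b*T)
        = (b-1-a)*(((b-1)*(a+1)+a*b)*((b-1)*S - b)) := by
      linear_combination ((b-1)*S - b)*hDW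
    have h6 : ((b-1-a)*((b-1)*a-1))*((b-1)*S + b*T)
        ≤ (((b-1)*S - b*T)*((b-1)*S - b))*((b-1)*S + b*T) := by
      rw [h5]
      nlinarith [mul_le_mul_of_nonneg_left hMEQW hc]
    exact le_of_mul_le_mul_right h6 hW
  have expand : 1/b + (1-(1+b/S)/b)*((b-1+a-T)/(b-1))
      = ((b-1)*S + (b*S-S-b)*(b-1+a-T))/(b*(b-1)*S) := by
    field_simp; ring
  rw [expand, div_le_div_iff₀ hb0 (by positivity)]
  have hz : (b-1)*(S^2 - (b^2+(a+1)^2)) = 0 := by rw [hS2]; ring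
  have iden : ((b-1)*S + (b*S-S-b)*(b-1+a-T))*b - (b+a+1-S)*(b*(b-1)*S)
      = ((b-1)*S - b*T)*((b-1)*S - b) - (b-1-a)*((b-1)*a-1)
        + (b-1)*(S^2 - (b^2+(a+1)^2)) := by ring
  linarith [hDE, iden, hz]


lemma Abranch (a b S S' r : ℝ) (hb : 1 ≤ b) (ha : 0 ≤ a)
    (hS2 : S^2 = b^2 + (a+1)^2) (hS : 0 ≤ S) (hS'2 : S'^2 = b^2 + a^2) (hS' : 0 ≤ S')
    (hr : (b+a-S')/b ≤ r) :
    (b+a+1-S)/b ≤ b/S/b + (1-b/S/b)*r := by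
  have hb0 : (0:ℝ) < b := by linarith
  have hbS : b ≤ S := by nlinarith [sq_nonneg (S - b)]
  have hbS' : b ≤ S' := by nlinarith [sq_nonneg (S' - b)]
  have hS0 : (0:ℝ) < S := by linarith
  have hS'0 : (0:ℝ) < S' := by linarith
  have hcoef : 0 ≤ 1 - b/S/b := by
    have : b/S/b = 1/S := by field_simp
    rw [this, sub_nonneg, div_le_one hS0]; linarith
  have hchain : b/S/b + (1-b/S/b)*((b+a-S')/b) ≤ b/S/b + (1-b/S/b)*r := by
    have := mul_le_mul_of_nonneg_left hr hcoef; linarith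
  refine le_trans ?_ hchain
  have hu : (0:ℝ) < (a+1)*S + a*S' := by nlinarith [mul_nonneg ha hS']
  have hprod : ((a+1)*S - a*S')*((a+1)*S + a*S') = (2*a+1)*(b^2+a^2+(a+1)^2) := by
    linear_combination (a+1)^2*hS2 - a^2*hS'2
  have hWb : (a+1)*S + a*S' ≤ b^2+a^2+(a+1)^2 := by
    nlinarith [sq_nonneg (S-(a+1)), sq_nonneg (S'-a)]
  have key2 : 2*a+1 ≤ (a+1)*S - a*S' := by
    nlinarith [hprod, mul_le_mul_of_nonneg_left hWb (by linarith : (0:ℝ) ≤ 2*a+1), hu]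
  have hss : (S-S')*(S+S') = 2*a+1 := by linear_combination hS2 - hS'2
  have h7 : ((S-S')*(S-1))*(S+S') = (2*a+1)*(S-1) := by linear_combination (S-1)*hss
  have h8 : a*(S+S') ≤ ((S-S')*(S-1))*(S+S') := by rw [h7]; linarith [key2]
  have hfin : a ≤ (S-S')*(S-1) := le_of_mul_le_mul_right h8 (by linarith)
  have expand : b/S/b + (1-b/S/b)*((b+a-S')/b) = (b + (S-1)*(b+a-S'))/(S*b) := by
    field_simp
  rw [expand, div_le_div_iff₀ hb0 (by positivity)]
  have h9 : 0 ≤ b + (S-1)*(b+a-S') - S*(b+a+1-S) := by nlinarith [hfin]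
  nlinarith [mul_le_mul_of_nonneg_left h9 hb0.le]

lemma Cbranch (a b S : ℝ) (hb : 1 ≤ b) (ha : 0 ≤ a) (hab : a + 1 ≤ b)
    (hS2 : S^2 = b^2 + (a+1)^2) (hS : 0 ≤ S) :
    (b+a+1-S)/b ≤ 1/(1+b/S) := by
  have hb0 : (0:ℝ) < b := by linarith
  have hbS : b ≤ S := by nlinarith [sq_nonneg (S - b)]
  have hS0 : (0:ℝ) < S := by linarith
  have haS : a+1 ≤ S := by nlinarith [sq_nonneg (S-(a+1))]
  have h1 : 1+b/S = (S+b)/S := by field_simp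
  rw [h1, one_div_div, div_le_div_iff₀ hb0 (by linarith)]
  nlinarith [mul_nonneg (by linarith : (0:ℝ) ≤ S-(a+1)) (by linarith : (0:ℝ) ≤ b-(a+1))]

lemma lower : ∀ h k : ℕ, 1 ≤ k → h ≤ k →
    ((k:ℝ) + h - Real.sqrt ((k:ℝ)^2 + (h:ℝ)^2)) / k ≤ R k h := by
  intro h
  induction h with
  | zero =>
      intro k hk _
      have hk0 : (0:ℝ) ≤ k := by positivity
      simp only [R, Nat.cast_zero]
      rw [show (k:ℝ)^2 + (0:ℝ)^2 = (k:ℝ)^2 by ring, Real.sqrt_sq hk0]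
      simp
  | succ h IH =>
      intro k hk hhk
      have hk0 : (0:ℝ) < k := by exact_mod_cast hk
      have hab : (h:ℝ) + 1 ≤ k := by exact_mod_cast hhk
      have ha : (0:ℝ) ≤ h := by positivity
      simp only [R]
      have hcast : ((h:ℕ) + 1 : ℕ) = h + 1 := rfl
      push_cast
      set S := Real.sqrt ((k:ℝ)^2 + ((h:ℝ)+1)^2) with hSdef
      have hS : 0 ≤ S := Real.sqrt_nonneg _
      have hS2 : S^2 = (k:ℝ)^2 + ((h:ℝ)+1)^2 := Real.sq_sqrt (by positivity)
      have htt : tthr k (h+1) = (k:ℝ)/S := by rw [tthr]; push_cast; rfl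
      rw [htt]
      refine le_min (le_min ?_ ?_) ?_
      · -- A branch
        set S' := Real.sqrt ((k:ℝ)^2 + (h:ℝ)^2) with hS'def
        have hr : ((k:ℝ) + h - S')/k ≤ R k h := IH k hk (by omega)
        have := Abranch h k S S' (R k h) (by exact_mod_cast hk) ha hS2 hS
          (Real.sq_sqrt (by positivity)) (Real.sqrt_nonneg _) hr
        rw [show ((k:ℝ) + ((h:ℝ)+1) - S) = ((k:ℝ)+(h:ℝ)+1-S) from by ring]
        exact this
      · -- B branch
        match k, hk with
        | 1, _ =>
          have hh0 : h = 0 := by omega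
          subst hh0
          have hS2' : S^2 = 2 := by rw [hS2]; norm_num
          have hsqrt2 : S = Real.sqrt 2 := by
            rw [hSdef]; norm_num
          have h2 : (1:ℝ) ≤ Real.sqrt 2 := by
            nlinarith [Real.sq_sqrt (by norm_num : (0:ℝ) ≤ 2), Real.sqrt_nonneg 2]
          simp only [R]
          norm_num
          rw [hsqrt2]
          nlinarith [h2]
        | (m+2), _ =>
          simp only [show m+2-1 = m+1 from rfl]
          push_cast
          set T := Real.sqrt (((m+1:ℕ):ℝ)^2 + (h:ℝ)^2) with hTdef
          have hr0 : (((m+1:ℕ):ℝ) + h - T)/((m+1:ℕ):ℝ) ≤ R (m+1) h :=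
            IH (m+1) (by omega) (by omega)
          have hr : (((m:ℝ)+2) - 1 + h - T)/(((m:ℝ)+2)-1) ≤ R (m+1) h := by
            have e : ((m:ℝ)+2) - 1 = ((m+1:ℕ):ℝ) := by push_cast; ring
            rw [e]; exact hr0
          have hT2 : T^2 = (((m:ℝ)+2)-1)^2 + (h:ℝ)^2 := by
            rw [hTdef, Real.sq_sqrt (by positivity)]; push_cast; ring
          have hS2' : S^2 = ((m:ℝ)+2)^2 + ((h:ℝ)+1)^2 := by rw [hS2]; push_cast; ring
          have hB := Bbranch h ((m:ℝ)+2) S T (R (m+1) h)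
            (by linarith) ha (by push_cast at hab; linarith)
            hS2' hS hT2 (Real.sqrt_nonneg _) hr
          rw [show (((m:ℝ)+2) + ((h:ℝ)+1) - S) = ((m:ℝ)+2+(h:ℝ)+1-S) from by ring]
          exact hB
      · -- C branch
        have := Cbranch h k S (by exact_mod_cast hk) ha hab hS2 hS
        rw [show ((k:ℝ) + ((h:ℝ)+1) - S) = ((k:ℝ)+(h:ℝ)+1-S) from by ring]
        exact this

theorem stmt_3 (k : ℕ) (hk : 1 ≤ k) : R k k = 2 - Real.sqrt 2 := by
  have hk0 : (0:ℝ) < k := by exact_mod_cast hk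
  have hs2 : Real.sqrt 2 ^ 2 = 2 := Real.sq_sqrt (by norm_num)
  have hs2' : (0:ℝ) ≤ Real.sqrt 2 := Real.sqrt_nonneg 2
  have hs2'' : 1 ≤ Real.sqrt 2 := by nlinarith
  have hsqrtkk : Real.sqrt ((k:ℝ)^2 + (k:ℝ)^2) = Real.sqrt 2 * k := by
    rw [show (k:ℝ)^2 + (k:ℝ)^2 = 2 * (k:ℝ)^2 by ring, Real.sqrt_mul (by norm_num),
      Real.sqrt_sq hk0.le]
  have hlow : ((k:ℝ) + k - Real.sqrt ((k:ℝ)^2 + (k:ℝ)^2)) / k ≤ R k k := lower k k hk le_rfl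
  rw [hsqrtkk] at hlow
  have hlow' : 2 - Real.sqrt 2 ≤ R k k := by
    have : ((k:ℝ) + k - Real.sqrt 2 * k)/k = 2 - Real.sqrt 2 := by field_simp; ring
    linarith [hlow, this.symm.le]
  have hupper : R k k ≤ 2 - Real.sqrt 2 := by
    obtain ⟨m, rfl⟩ : ∃ m, k = m + 1 := ⟨k - 1, by omega⟩
    have htt : tthr (m+1) (m+1) = 1 / Real.sqrt 2 := by
      rw [tthr]
      have : Real.sqrt (((m+1:ℕ):ℝ)^2 + ((m+1:ℕ):ℝ)^2) = Real.sqrt 2 * ((m+1:ℕ):ℝ) := by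
        rw [show ((m+1:ℕ):ℝ)^2 + ((m+1:ℕ):ℝ)^2 = 2*((m+1:ℕ):ℝ)^2 by ring,
          Real.sqrt_mul (by norm_num), Real.sqrt_sq (by positivity)]
      rw [this]
      have hm0 : ((m+1:ℕ):ℝ) ≠ 0 := by positivity
      field_simp
    have hmin : R (m+1) (m+1) ≤ 1/(1 + tthr (m+1) (m+1)) := by
      simp only [R]
      exact min_le_right _ _
    rw [htt] at hmin
    have hval : 1/(1 + 1/Real.sqrt 2) = 2 - Real.sqrt 2 := by
      have h0 : Real.sqrt 2 ≠ 0 := by positivity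
      rw [eq_comm, eq_div_iff (by positivity)]
      field_simp
      nlinarith
    rw [hval] at hmin
    exact hmin
  linarith
end

section
/- For $\mu \in (-1,1)$ and $\rho \in (0,1)$, let $H$ denote the binary entropy function $H(p) = -p\log_2 p - (1-p)\log_2(1-p)$, and for $K \geq 1$ define $M_K(\rho) = K H\big(\frac{K}{K+1}\big) - \frac{K}{2} H\big(\frac{K+\rho}{K+1}\big) - \frac{K}{2} H\big(\frac{K-\rho}{K+1}\big)$. Then for all real $K \geq 1$ and $\rho \in (0,1)$, $M_K(\rho) \leq M_1(\rho) = 1 - H\big(\frac{1+\rho}{2}\big)$. -/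
/-! In nats, `M_K(ρ) = (K² φ(ρ/K) + K φ(ρ)) / (K + 1)` with
`φ(x) = ((1 + x) log (1 + x) + (1 - x) log (1 - x)) / 2`, and `M_1 = φ = 1 - H((1 + ρ)/2)`, so the
claim reduces to `K² φ(ρ/K) ≤ φ(ρ)`. Both sides vanish at `ρ = 0`, and their derivatives are
`K L(ρ/K) / 2` and `L(ρ) / 2` with `L(x) = log (1 + x) - log (1 - x) = 2 ∑ x^(2k+1) / (2k+1)`;
the series compare termwise because `K · K^-(2k+1) ≤ 1`. -/

/-- The binary entropy function (base 2). -/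
noncomputable def binEnt (p : ℝ) : ℝ := -p * Real.logb 2 p - (1 - p) * Real.logb 2 (1 - p)

/-- The function `M_K(ρ)`. -/
noncomputable def MK (K ρ : ℝ) : ℝ :=
  K * binEnt (K / (K + 1)) - K / 2 * binEnt ((K + ρ) / (K + 1))
    - K / 2 * binEnt ((K - ρ) / (K + 1))

open Real Set

noncomputable def entropyDeficit (x : ℝ) : ℝ :=
  ((1 + x) * log (1 + x) + (1 - x) * log (1 - x)) / 2

lemma hasDerivAt_entropyDeficit {x : ℝ} (hx : |x| < 1) :
    HasDerivAt entropyDeficit ((log (1 + x) - log (1 - x)) / 2) x := by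
  obtain ⟨hx₀, hx₁⟩ := abs_lt.1 hx
  have hp : HasDerivAt (fun y => 1 + y) 1 x := (hasDerivAt_id x).const_add 1
  have hm : HasDerivAt (fun y => 1 - y) (-1) x := (hasDerivAt_id x).const_sub 1
  have := ((hp.mul (hp.log (by linarith))).add (hm.mul (hm.log (by linarith)))).div_const 2
  refine this.congr_deriv ?_
  have h₁ : 1 + x ≠ 0 := by linarith
  have h₂ : 1 - x ≠ 0 := by linarith
  field_simp
  ring

lemma mul_log_sub_log_div_le {K x : ℝ} (hK : 1 ≤ K) (hx₀ : 0 ≤ x) (hx₁ : x < 1) :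
    K * (log (1 + x / K) - log (1 - x / K)) ≤ log (1 + x) - log (1 - x) := by
  have hxK₀ : 0 ≤ x / K := by positivity
  have hxK : x / K ≤ x := div_le_self hx₀ hK
  refine hasSum_le (fun k => ?_)
    ((hasSum_log_sub_log_of_abs_lt_one (abs_lt.2 ⟨by linarith, by linarith⟩)).mul_left K)
    (hasSum_log_sub_log_of_abs_lt_one (abs_lt.2 ⟨by linarith, hx₁⟩))
  have hpow : K * (x / K) ^ (2 * k + 1) ≤ x ^ (2 * k + 1) := by
    rw [div_pow, mul_div_assoc', div_le_iff₀ (by positivity), mul_comm]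
    exact mul_le_mul_of_nonneg_left (le_self_pow₀ hK (by omega)) (by positivity)
  calc K * (2 * (1 / (2 * k + 1)) * (x / K) ^ (2 * k + 1))
      = 2 * (1 / (2 * k + 1)) * (K * (x / K) ^ (2 * k + 1)) := by ring
    _ ≤ 2 * (1 / (2 * k + 1)) * x ^ (2 * k + 1) := by gcongr

lemma sq_mul_entropyDeficit_div_le {K ρ : ℝ} (hK : 1 ≤ K) (hρ₀ : 0 ≤ ρ) (hρ₁ : ρ < 1) :
    K ^ 2 * entropyDeficit (ρ / K) ≤ entropyDeficit ρ := by
  set F := fun x => entropyDeficit x - K ^ 2 * entropyDeficit (x / K)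
  have hF : ∀ x ∈ Ico (0 : ℝ) 1, HasDerivAt F
      ((log (1 + x) - log (1 - x) - K * (log (1 + x / K) - log (1 - x / K))) / 2) x := by
    rintro x ⟨hx₀, hx₁⟩
    have hxK₀ : 0 ≤ x / K := by positivity
    have hxK : x / K ≤ x := div_le_self hx₀ hK
    have hdiv := (hasDerivAt_entropyDeficit (x := x / K)
      (abs_lt.2 ⟨by linarith, by linarith⟩)).comp x
      ((hasDerivAt_id x).div_const K)
    have := (hasDerivAt_entropyDeficit (abs_lt.2 ⟨by linarith, hx₁⟩)).sub (hdiv.const_mul (K ^ 2))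
    refine this.congr_deriv ?_
    field_simp
  have hmono : MonotoneOn F (Ico 0 1) := by
    refine monotoneOn_of_hasDerivWithinAt_nonneg (convex_Ico 0 1)
      (fun x hx => (hF x hx).continuousAt.continuousWithinAt)
      (fun x hx => (hF x (interior_subset hx)).hasDerivWithinAt) (fun x hx => ?_)
    obtain ⟨hx₀, hx₁⟩ := interior_subset hx
    linarith [mul_log_sub_log_div_le hK hx₀ hx₁]
  have := hmono ⟨le_rfl, one_pos⟩ ⟨hρ₀, hρ₁⟩ hρ₀
  simpa [F, entropyDeficit] using this

lemma MK_eq {K ρ : ℝ} (hK : 1 ≤ K) (hρ : |ρ| < 1) :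
    MK K ρ = (K ^ 2 * entropyDeficit (ρ / K) + K * entropyDeficit ρ) / ((K + 1) * log 2) := by
  obtain ⟨hρ₀, hρ₁⟩ := abs_lt.1 hρ
  have hK₀ : K ≠ 0 := by positivity
  have hK₁ : K + 1 ≠ 0 := by positivity
  have hKp : K + ρ ≠ 0 := by linarith
  have hKm : K - ρ ≠ 0 := by linarith
  have h1p : 1 + ρ ≠ 0 := by linarith
  have h1m : 1 - ρ ≠ 0 := by linarith
  have e₁ : 1 - K / (K + 1) = 1 / (K + 1) := by field_simp; ring
  have e₂ : 1 - (K + ρ) / (K + 1) = (1 - ρ) / (K + 1) := by field_simp; ring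
  have e₃ : 1 - (K - ρ) / (K + 1) = (1 + ρ) / (K + 1) := by field_simp; ring
  have e₄ : 1 + ρ / K = (K + ρ) / K := by field_simp
  have e₅ : 1 - ρ / K = (K - ρ) / K := by field_simp
  simp only [MK, binEnt, entropyDeficit, logb, e₁, e₂, e₃, e₄, e₅, log_div hK₀ hK₁,
    log_div one_ne_zero hK₁, log_div hKp hK₁, log_div hKm hK₁, log_div h1p hK₁, log_div h1m hK₁,
    log_div hKp hK₀, log_div hKm hK₀, log_one]
  field_simp
  ring

lemma MK_one {ρ : ℝ} (hρ : |ρ| < 1) : MK 1 ρ = entropyDeficit ρ / log 2 := by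
  rw [MK_eq le_rfl hρ]
  ring_nf

lemma one_sub_binEnt_eq {x : ℝ} (hx : |x| < 1) :
    1 - binEnt ((1 + x) / 2) = entropyDeficit x / log 2 := by
  obtain ⟨hx₀, hx₁⟩ := abs_lt.1 hx
  have e : 1 - (1 + x) / 2 = (1 - x) / 2 := by ring
  simp only [binEnt, entropyDeficit, logb, e, log_div (by linarith : 1 + x ≠ 0) two_ne_zero,
    log_div (by linarith : 1 - x ≠ 0) two_ne_zero]
  field_simp
  ring

theorem stmt_14 (K ρ : ℝ) (hK : 1 ≤ K) (hρ : ρ ∈ Set.Ioo (0 : ℝ) 1) :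
    MK K ρ ≤ MK 1 ρ ∧ MK 1 ρ = 1 - binEnt ((1 + ρ) / 2) := by
  obtain ⟨hρ₀, hρ₁⟩ := hρ
  have hρ : |ρ| < 1 := abs_lt.2 ⟨by linarith, hρ₁⟩
  refine ⟨?_, by rw [MK_one hρ, one_sub_binEnt_eq hρ]⟩
  have hlog2 : 0 < log 2 := log_pos one_lt_two
  calc MK K ρ = (K ^ 2 * entropyDeficit (ρ / K) + K * entropyDeficit ρ) / ((K + 1) * log 2) :=
        MK_eq hK hρ
    _ ≤ ((K + 1) * entropyDeficit ρ) / ((K + 1) * log 2) := by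
        gcongr
        linarith [sq_mul_entropyDeficit_div_le hK hρ₀.le hρ₁]
    _ = MK 1 ρ := by
        rw [MK_one hρ]
        field_simp
end
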